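/- Define A(x) = diag(e^{λ(x)}, e^{−λ(x)}) with λ(x) = e^{2πi q₀ x} for a positive integer q₀. Then for α = p/q rational with q dividing q₀, L(α, A_ε) = (2/π) e^{−2π q₀ ε}, while for all other α (in particular all irrational α), L(α, A_ε) = 0, for every ε ∈ ℝ. In particular the Lyapunov exponent (α, ε fixed > 0) is discontinuous in α at rationals p/q with q | q₀, and ε ↦ L(p/q, A_ε) is not piecewise linear there (no quantization at rationals). -/

import Mathlib

open Filter MeasureTheory Set

/-- Frobenius-type norm of a 2×2 complex matrix. -/
noncomputable def mnorm (B : Matrix (Fin 2) (Fin 2) ℂ) : ℝ :=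
  Real.sqrt (∑ i : Fin 2, ∑ j : Fin 2, ‖B i j‖ ^ 2)

/-- Euclidean norm of a vector in ℂ². -/
noncomputable def vnorm (w : Fin 2 → ℂ) : ℝ :=
  Real.sqrt (∑ i : Fin 2, ‖w i‖ ^ 2)

/-- The n-step cocycle product A(x+(n-1)α)⋯A(x+α)A(x). -/
noncomputable def cocycle (A : ℝ → Matrix (Fin 2) (Fin 2) ℂ) (α : ℝ) (n : ℕ) (x : ℝ) :
    Matrix (Fin 2) (Fin 2) ℂ :=
  (((List.range n).reverse).map (fun k => A (x + k * α))).prod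

/-- The Lyapunov exponent L(α,A) = lim (1/n) ∫ log‖A_n(x)‖ dx. -/
noncomputable def lyap (α : ℝ) (A : ℝ → Matrix (Fin 2) (Fin 2) ℂ) : ℝ :=
  Filter.limsup
    (fun n : ℕ => (n : ℝ)⁻¹ * ∫ x in (0:ℝ)..1, Real.log (mnorm (cocycle A α n x)))
    Filter.atTop

noncomputable def lamEx (q₀ : ℕ) (z : ℂ) : ℂ :=
  Complex.exp (2 * Real.pi * Complex.I * (q₀ : ℂ) * z)

/-- The diagonal example A(x) = diag(e^{λ(x)}, e^{-λ(x)}), λ(x) = e^{2πi q₀ x}. -/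
noncomputable def diagEx (q₀ : ℕ) (z : ℂ) : Matrix (Fin 2) (Fin 2) ℂ :=
  !![Complex.exp (lamEx q₀ z), 0; 0, Complex.exp (-lamEx q₀ z)]

/-!
For a diagonal cocycle `diag(e^Λ, e^{-Λ})` the `n`-step product is `diag(e^{S_n}, e^{-S_n})`, where
`S_n` is the Birkhoff sum of `Λ` over the rotation `x ↦ x + α`, and `log ‖diag(e^z, e^{-z})‖`
differs from `|Re z|` by at most `log 2 / 2`. Hence `L` is the limit of the means of `|Re S_n| / n`.
For `Λ(x) = λ(x + iε)` one has `S_n(x) = λ(x + iε) ∑_{k<n} ω^k` with `ω = e^{2πi q₀ α}`.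
If `ω = 1`, i.e. `q₀ α ∈ ℤ` (for `α = p/q` in lowest terms: `q ∣ q₀`), then `S_n = n λ` and
`L = e^{-2πq₀ε} ∫₀¹ |cos 2πq₀x| dx = (2/π) e^{-2πq₀ε}`. Otherwise the geometric sum is bounded by
`2 / |ω - 1|` and `L = 0`. Irrationals being dense, `L(·, A_ε)` is discontinuous at the resonant
rationals, and `ε ↦ (2/π) e^{-2πq₀ε}` is affine on no interval.
-/

open Complex (I)
open scoped Topology Real
open intervalIntegral

noncomputable def expDiag (z : ℂ) : Matrix (Fin 2) (Fin 2) ℂ :=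
  !![Complex.exp z, 0; 0, Complex.exp (-z)]

lemma expDiag_zero : expDiag 0 = 1 := by
  ext i j; fin_cases i <;> fin_cases j <;> simp [expDiag]

lemma expDiag_mul_expDiag (z w : ℂ) : expDiag z * expDiag w = expDiag (z + w) := by
  simp only [expDiag, Matrix.mul_fin_two, Complex.exp_add, neg_add, mul_zero, zero_mul,
    add_zero, zero_add]

lemma cocycle_succ (A : ℝ → Matrix (Fin 2) (Fin 2) ℂ) (α : ℝ) (n : ℕ) (x : ℝ) :
    cocycle A α (n + 1) x = A (x + n * α) * cocycle A α n x := by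
  simp [cocycle, List.range_succ]

lemma cocycle_expDiag (Λ : ℝ → ℂ) (α : ℝ) (n : ℕ) (x : ℝ) :
    cocycle (fun x => expDiag (Λ x)) α n x = expDiag (birkhoffSum (· + α) Λ n x) := by
  induction n with
  | zero => simp [cocycle, expDiag_zero]
  | succ n ih =>
    rw [cocycle_succ, ih, expDiag_mul_expDiag, birkhoffSum_succ, add_comm, add_right_iterate_apply,
      nsmul_eq_mul]

lemma log_mnorm_expDiag (z : ℂ) :
    Real.log (mnorm (expDiag z)) = Real.log (Real.exp (2 * z.re) + Real.exp (-(2 * z.re))) / 2 := by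
  have hsq : mnorm (expDiag z) = Real.sqrt (Real.exp (2 * z.re) + Real.exp (-(2 * z.re))) := by
    simp only [mnorm, expDiag, Fin.sum_univ_two, Matrix.of_apply, Matrix.cons_val',
      Matrix.cons_val_zero, Matrix.cons_val_one, Matrix.empty_val', Matrix.cons_val_fin_one,
      norm_zero, Complex.norm_exp, Complex.neg_re, ← Real.exp_nat_mul]
    ring_nf
  rw [hsq, Real.log_sqrt (by positivity)]

lemma abs_re_le_log_mnorm_expDiag (z : ℂ) : |z.re| ≤ Real.log (mnorm (expDiag z)) := by
  have h := Real.log_le_log (Real.exp_pos _) (Real.exp_abs_le (2 * z.re))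
  rw [Real.log_exp, abs_mul, abs_two] at h
  rw [log_mnorm_expDiag]
  linarith

lemma log_mnorm_expDiag_le (z : ℂ) :
    Real.log (mnorm (expDiag z)) ≤ |z.re| + Real.log 2 / 2 := by
  have hsum : Real.exp (2 * z.re) + Real.exp (-(2 * z.re)) ≤ 2 * Real.exp (2 * |z.re|) := by
    have h₁ : Real.exp (2 * z.re) ≤ Real.exp (2 * |z.re|) :=
      Real.exp_le_exp.2 (by linarith [le_abs_self z.re])
    have h₂ : Real.exp (-(2 * z.re)) ≤ Real.exp (2 * |z.re|) :=
      Real.exp_le_exp.2 (by linarith [neg_abs_le z.re])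
    linarith
  have h := Real.log_le_log (by positivity) hsum
  rw [Real.log_mul two_ne_zero (Real.exp_ne_zero _), Real.log_exp] at h
  rw [log_mnorm_expDiag]
  linarith

lemma Continuous.log_mnorm_expDiag {f : ℝ → ℂ} (hf : Continuous f) :
    Continuous fun x => Real.log (mnorm (expDiag (f x))) := by
  simp only [_root_.log_mnorm_expDiag]
  exact (Continuous.log (by fun_prop) fun x => by positivity).div_const 2

lemma Continuous.birkhoffSum_add_right {Λ : ℝ → ℂ} (hΛ : Continuous Λ) (α : ℝ) (n : ℕ) :
    Continuous (birkhoffSum (· + α) Λ n) :=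
  continuous_finsetSum _ fun k _ => hΛ.comp ((continuous_add_const α).iterate k)

lemma lyap_expDiag_eq_of_tendsto {Λ : ℝ → ℂ} (hΛ : Continuous Λ) {α L : ℝ}
    (h : Tendsto (fun n : ℕ => (n : ℝ)⁻¹ * ∫ x in (0 : ℝ)..1, |(birkhoffSum (· + α) Λ n x).re|)
      atTop (𝓝 L)) :
    lyap α (fun x => expDiag (Λ x)) = L := by
  set S := birkhoffSum (· + α) Λ
  have hS : ∀ n, Continuous (S n) := hΛ.birkhoffSum_add_right α
  have hdiff : ∀ n : ℕ,
      ‖(n : ℝ)⁻¹ * (∫ x in (0 : ℝ)..1, Real.log (mnorm (expDiag (S n x)))) -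
        (n : ℝ)⁻¹ * ∫ x in (0 : ℝ)..1, |(S n x).re|‖ ≤ Real.log 2 / 2 / n := by
    intro n
    rw [← mul_sub, ← intervalIntegral.integral_sub ((hS n).log_mnorm_expDiag.intervalIntegrable _ _)
      (Continuous.intervalIntegrable (by fun_prop) _ _), norm_mul, norm_inv,
      Real.norm_natCast, div_eq_inv_mul]
    have hpt : ∀ x, ‖Real.log (mnorm (expDiag (S n x))) - |(S n x).re|‖ ≤ Real.log 2 / 2 := by
      intro x
      rw [Real.norm_eq_abs, abs_le]
      constructor <;> linarith [abs_re_le_log_mnorm_expDiag (S n x),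
        log_mnorm_expDiag_le (S n x), Real.log_nonneg one_le_two]
    gcongr
    simpa using norm_integral_le_of_norm_le_const (a := (0 : ℝ)) (b := 1) fun x _ => hpt x
  have hgap := squeeze_zero_norm hdiff (tendsto_const_div_atTop_nhds_zero_nat _)
  simp only [lyap, cocycle_expDiag]
  simpa using (hgap.add h).limsup_eq

lemma periodic_abs_cos : Function.Periodic (fun x => |Real.cos x|) π := fun x => by
  simp [Real.cos_add_pi]

lemma integral_abs_cos_zero_pi : ∫ x in (0 : ℝ)..π, |Real.cos x| = 2 := by
  have hshift := periodic_abs_cos.intervalIntegral_add_eq 0 (-(π / 2))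
  rw [zero_add, show -(π / 2) + π = π / 2 by ring] at hshift
  rw [hshift, integral_congr (g := Real.cos) fun x hx => abs_of_nonneg
    (Real.cos_nonneg_of_mem_Icc (by rwa [uIcc_of_le (by linarith [Real.pi_pos])] at hx))]
  simp only [integral_cos, Real.sin_neg, Real.sin_pi_div_two]
  norm_num

lemma integral_abs_cos_two_pi_mul {m : ℕ} (hm : 0 < m) :
    ∫ x in (0 : ℝ)..1, |Real.cos (2 * π * m * x)| = 2 / π := by
  have hfull : ∫ x in (0 : ℝ)..2 * π * m, |Real.cos x| = 2 * m * 2 := by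
    have h := periodic_abs_cos.intervalIntegral_add_zsmul_eq (2 * m) 0
      fun _ _ => (by fun_prop : Continuous _).intervalIntegrable _ _
    rw [zero_add, zero_add, integral_abs_cos_zero_pi, zsmul_eq_mul, zsmul_eq_mul] at h
    push_cast at h
    rwa [show 2 * π * m = 2 * m * π by ring]
  rw [integral_comp_mul_left (fun x => |Real.cos x|) (by positivity), mul_zero, mul_one, hfull,
    smul_eq_mul]
  field_simp

lemma norm_geom_sum_le {K : Type*} [NormedDivisionRing K] {ω : K} (hω : ‖ω‖ = 1) (hω₁ : ω ≠ 1)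
    (n : ℕ) : ‖∑ k ∈ Finset.range n, ω ^ k‖ ≤ 2 / ‖ω - 1‖ := by
  rw [geom_sum_eq hω₁, norm_div]
  gcongr
  calc ‖ω ^ n - 1‖ ≤ ‖ω ^ n‖ + ‖(1 : K)‖ := norm_sub_le _ _
    _ = 2 := by rw [norm_pow, hω, one_pow, norm_one]; norm_num

section DiagonalExample

variable {q₀ : ℕ}

lemma lamEx_add (z w : ℂ) : lamEx q₀ (z + w) = lamEx q₀ z * lamEx q₀ w := by
  simp only [lamEx, ← Complex.exp_add, mul_add]

lemma lamEx_natCast_mul (k : ℕ) (z : ℂ) : lamEx q₀ (k * z) = lamEx q₀ z ^ k := by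
  rw [lamEx, lamEx, ← Complex.exp_nat_mul]
  ring_nf

lemma lamEx_ofReal_add_mul_I (x ε : ℝ) :
    lamEx q₀ (x + ε * I) =
      (Real.exp (-(2 * π * q₀ * ε)) : ℂ) * Complex.exp ((2 * π * q₀ * x : ℝ) * I) := by
  rw [lamEx, Complex.ofReal_exp, ← Complex.exp_add]
  congr 1
  push_cast
  linear_combination (2 * π * q₀ * ε : ℂ) * Complex.I_sq

lemma norm_lamEx_ofReal_add_mul_I (x ε : ℝ) :
    ‖lamEx q₀ (x + ε * I)‖ = Real.exp (-(2 * π * q₀ * ε)) := by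
  rw [lamEx_ofReal_add_mul_I, norm_mul, Complex.norm_exp_ofReal_mul_I, mul_one,
    Complex.norm_real, Real.norm_of_nonneg (Real.exp_pos _).le]

lemma re_lamEx_ofReal_add_mul_I (x ε : ℝ) :
    (lamEx q₀ (x + ε * I)).re = Real.exp (-(2 * π * q₀ * ε)) * Real.cos (2 * π * q₀ * x) := by
  rw [lamEx_ofReal_add_mul_I, Complex.re_ofReal_mul, Complex.exp_ofReal_mul_I_re]

lemma norm_lamEx_ofReal (α : ℝ) : ‖lamEx q₀ α‖ = 1 := by
  simpa using norm_lamEx_ofReal_add_mul_I (q₀ := q₀) α 0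

lemma lamEx_ofReal_eq_one_iff (α : ℝ) : lamEx q₀ α = 1 ↔ ∃ n : ℤ, (q₀ : ℝ) * α = n := by
  have h2πI : 2 * π * I ≠ 0 := by simp [Real.pi_ne_zero, Complex.I_ne_zero]
  rw [lamEx, Complex.exp_eq_one_iff]
  refine exists_congr fun n => ?_
  rw [← Complex.ofReal_inj, show (2 * π * I * q₀ * α : ℂ) = (q₀ * α : ℝ) * (2 * π * I) by
    push_cast; ring, mul_left_inj' h2πI]
  push_cast
  rfl

lemma birkhoffSum_lamEx (ε α : ℝ) (n : ℕ) (x : ℝ) :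
    birkhoffSum (· + α) (fun x : ℝ => lamEx q₀ (x + ε * I)) n x =
      lamEx q₀ (x + ε * I) * ∑ k ∈ Finset.range n, lamEx q₀ α ^ k := by
  rw [birkhoffSum, Finset.mul_sum]
  refine Finset.sum_congr rfl fun k _ => ?_
  rw [add_right_iterate_apply, nsmul_eq_mul, ← lamEx_natCast_mul, ← lamEx_add]
  push_cast
  ring_nf

lemma continuous_lamEx_ofReal_add_mul_I (ε : ℝ) :
    Continuous fun x : ℝ => lamEx q₀ (x + ε * I) := by
  unfold lamEx; fun_prop

lemma lyap_diagEx_of_resonant (hq₀ : 0 < q₀) (ε : ℝ) {α : ℝ} (hα : lamEx q₀ α = 1) :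
    lyap α (fun x : ℝ => diagEx q₀ (x + ε * I)) = 2 / π * Real.exp (-(2 * π * q₀ * ε)) := by
  refine lyap_expDiag_eq_of_tendsto (continuous_lamEx_ofReal_add_mul_I ε) <|
    tendsto_const_nhds.congr' <| (eventually_ne_atTop 0).mono fun n hn => ?_
  have hre : ∀ x : ℝ, |(birkhoffSum (· + α) (fun x : ℝ => lamEx q₀ (x + ε * I)) n x).re| =
      n * (Real.exp (-(2 * π * q₀ * ε)) * |Real.cos (2 * π * q₀ * x)|) := by
    intro x
    simp only [birkhoffSum_lamEx, hα, one_pow, Finset.sum_const, Finset.card_range, nsmul_one,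
      Complex.mul_re, Complex.natCast_re, Complex.natCast_im, mul_zero, sub_zero]
    rw [re_lamEx_ofReal_add_mul_I, abs_mul, abs_mul, Nat.abs_cast, abs_of_pos (Real.exp_pos _)]
    ring
  simp only [hre, intervalIntegral.integral_const_mul, integral_abs_cos_two_pi_mul hq₀]
  field_simp

lemma lyap_diagEx_of_nonresonant (ε : ℝ) {α : ℝ} (hα : lamEx q₀ α ≠ 1) :
    lyap α (fun x : ℝ => diagEx q₀ (x + ε * I)) = 0 := by
  set C := Real.exp (-(2 * π * q₀ * ε)) * (2 / ‖lamEx q₀ α - 1‖)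
  refine lyap_expDiag_eq_of_tendsto (continuous_lamEx_ofReal_add_mul_I ε) <|
    squeeze_zero (fun n => ?_) (fun n => ?_) (tendsto_const_div_atTop_nhds_zero_nat C)
  · exact mul_nonneg (by positivity) <|
      intervalIntegral.integral_nonneg zero_le_one fun _ _ => abs_nonneg _
  have hbound : ∀ x : ℝ,
      |(birkhoffSum (· + α) (fun x : ℝ => lamEx q₀ (x + ε * I)) n x).re| ≤ C := by
    intro x
    refine (Complex.abs_re_le_norm _).trans ?_
    rw [birkhoffSum_lamEx, norm_mul, norm_lamEx_ofReal_add_mul_I]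
    exact mul_le_mul_of_nonneg_left (norm_geom_sum_le (norm_lamEx_ofReal α) hα n) (by positivity)
  have hS := (continuous_lamEx_ofReal_add_mul_I (q₀ := q₀) ε).birkhoffSum_add_right α n
  rw [div_eq_inv_mul]
  gcongr
  simpa using intervalIntegral.integral_mono_on (μ := volume) zero_le_one
    (Continuous.intervalIntegrable (by fun_prop) _ _) intervalIntegrable_const fun x _ => hbound x

end DiagonalExample

lemma exists_int_eq_natCast_mul_div_iff (m : ℕ) {p : ℤ} {q : ℕ} (hq : 0 < q)
    (hpq : Nat.Coprime p.natAbs q) : (∃ n : ℤ, (m : ℝ) * (p / q) = n) ↔ q ∣ m := by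
  have hq' : (q : ℝ) ≠ 0 := by positivity
  constructor
  · rintro ⟨n, hn⟩
    have hint : (m : ℤ) * p = n * q := by
      rw [mul_div_assoc', div_eq_iff hq'] at hn
      exact_mod_cast hn
    have hdvd : q ∣ m * p.natAbs := by
      simpa [Int.natAbs_mul] using Int.natAbs_dvd_natAbs.2 (Dvd.intro_left _ hint.symm)
    exact hpq.symm.dvd_of_dvd_mul_right hdvd
  · rintro ⟨k, rfl⟩
    exact ⟨k * p, by push_cast; field_simp⟩

lemma Irrational.not_exists_int_eq_natCast_mul {α : ℝ} (hα : Irrational α) {m : ℕ} (hm : m ≠ 0) :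
    ¬ ∃ n : ℤ, (m : ℝ) * α = n :=
  fun ⟨n, hn⟩ => (hα.natCast_mul hm).ne_int n hn

lemma ContinuousAt.eq_of_forall_irrational {f : ℝ → ℝ} {x c : ℝ} (hf : ContinuousAt f x)
    (h : ∀ y, Irrational y → f y = c) : f x = c := by
  have hx := hf.continuousWithinAt.mem_closure_image (dense_irrational x)
  have himage : f '' {y | Irrational y} ⊆ {c} := by
    rintro _ ⟨y, hy, rfl⟩
    exact h y hy
  simpa using closure_mono himage hx

/-- Three equally spaced values of an affine function satisfy `f₁ - 2 f₂ + f₃ = 0`, while for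
`C e^{Kε}` this second difference is `C e^{Kε₁} (e^{Kd} - 1)²`. -/
lemma not_exists_affine_eq_const_mul_exp {C K a b : ℝ} (hC : C ≠ 0) (hK : K ≠ 0) (hab : a < b) :
    ¬ ∃ c s : ℝ, ∀ ε ∈ Ioo a b, C * Real.exp (K * ε) = c + s * ε := by
  rintro ⟨c, s, h⟩
  obtain ⟨d, hd, hdb⟩ : ∃ d, 0 < d ∧ a + 3 * d < b := ⟨(b - a) / 4, by linarith, by linarith⟩
  have h₁ := h (a + d) ⟨by linarith, by linarith⟩
  have h₂ := h (a + 2 * d) ⟨by linarith, by linarith⟩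
  have h₃ := h (a + 3 * d) ⟨by linarith, by linarith⟩
  set e := Real.exp (K * (a + d))
  set u := Real.exp (K * d)
  have he₂ : Real.exp (K * (a + 2 * d)) = e * u := by rw [← Real.exp_add]; ring_nf
  have he₃ : Real.exp (K * (a + 3 * d)) = e * u ^ 2 := by
    rw [← Real.exp_nat_mul, ← Real.exp_add]; ring_nf
  rw [he₂] at h₂
  rw [he₃] at h₃
  have hsecond : C * e * (u - 1) ^ 2 = 0 := by linear_combination h₁ - 2 * h₂ + h₃
  have hu : u = 1 := by
    simpa [sub_eq_zero, hC, Real.exp_ne_zero, e] using hsecond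
  exact mul_ne_zero hK hd.ne' (Real.exp_eq_one_iff _ |>.1 hu)

/-- For the diagonal example: L(p/q, A_ε) = (2/π)e^{-2π q₀ ε} when q ∣ q₀ (p/q in
lowest terms), and L(α, A_ε) = 0 for all other α, in particular for irrational α.
Hence (for ε > 0) α ↦ L(α, A_ε) is discontinuous at such rationals, and
ε ↦ L(p/q, A_ε) is not affine on any interval (no quantization at rationals). -/
theorem diagonal_example (q₀ : ℕ) (hq₀ : 0 < q₀) :
    (∀ ε : ℝ, ∀ p : ℤ, ∀ q : ℕ, 0 < q → Nat.Coprime p.natAbs q →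
      (q ∣ q₀ →
        lyap ((p : ℝ) / q) (fun x : ℝ => diagEx q₀ (x + ε * Complex.I))
          = (2 / Real.pi) * Real.exp (-(2 * Real.pi * q₀ * ε))) ∧
      (¬ q ∣ q₀ →
        lyap ((p : ℝ) / q) (fun x : ℝ => diagEx q₀ (x + ε * Complex.I)) = 0)) ∧
    (∀ ε : ℝ, ∀ α : ℝ, Irrational α →
      lyap α (fun x : ℝ => diagEx q₀ (x + ε * Complex.I)) = 0) ∧
    (∀ ε : ℝ, 0 < ε → ∀ p : ℤ, ∀ q : ℕ, 0 < q → Nat.Coprime p.natAbs q → q ∣ q₀ →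
      ¬ ContinuousAt
        (fun β : ℝ => lyap β (fun x : ℝ => diagEx q₀ (x + ε * Complex.I)))
        ((p : ℝ) / q)) ∧
    (∀ p : ℤ, ∀ q : ℕ, 0 < q → Nat.Coprime p.natAbs q → q ∣ q₀ →
      ∀ a b : ℝ, a < b →
        ¬ ∃ c s : ℝ, ∀ ε ∈ Set.Ioo a b,
          lyap ((p : ℝ) / q) (fun x : ℝ => diagEx q₀ (x + ε * Complex.I))
            = c + s * ε) := by
  have rational : ∀ ε : ℝ, ∀ p : ℤ, ∀ q : ℕ, 0 < q → Nat.Coprime p.natAbs q →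
      (q ∣ q₀ → lyap ((p : ℝ) / q) (fun x : ℝ => diagEx q₀ (x + ε * I))
          = 2 / π * Real.exp (-(2 * π * q₀ * ε))) ∧
      (¬ q ∣ q₀ → lyap ((p : ℝ) / q) (fun x : ℝ => diagEx q₀ (x + ε * I)) = 0) := by
    intro ε p q hq hpq
    simp only [← exists_int_eq_natCast_mul_div_iff q₀ hq hpq, ← lamEx_ofReal_eq_one_iff]
    exact ⟨lyap_diagEx_of_resonant hq₀ ε, lyap_diagEx_of_nonresonant ε⟩
  have irrational : ∀ ε α : ℝ, Irrational α →
      lyap α (fun x : ℝ => diagEx q₀ (x + ε * I)) = 0 := fun ε α hα =>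
    lyap_diagEx_of_nonresonant ε <| by
      rw [Ne, lamEx_ofReal_eq_one_iff]
      exact hα.not_exists_int_eq_natCast_mul hq₀.ne'
  refine ⟨rational, irrational, ?_, ?_⟩
  · intro ε _ p q hq hpq hdvd hcont
    have hzero := hcont.eq_of_forall_irrational (irrational ε)
    rw [(rational ε p q hq hpq).1 hdvd] at hzero
    exact (by positivity : 0 < 2 / π * Real.exp (-(2 * π * q₀ * ε))).ne' hzero
  · rintro p q hq hpq hdvd a b hab ⟨c, s, h⟩
    refine not_exists_affine_eq_const_mul_exp (C := 2 / π) (K := -(2 * π * q₀)) (by positivity)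
      (by simp [Real.pi_ne_zero, hq₀.ne']) hab ⟨c, s, fun ε hε => ?_⟩
    rw [← h ε hε, (rational ε p q hq hpq).1 hdvd, neg_mul]
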